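/- arXiv:1402.1583 — 2 statements merged into one kernel-verified Lean document; each statement's English description precedes it below -/
import Mathlib

section
/- Let a ∈ (0,1), b ≥ 1. Then for all t ≥ 0: (1+t)^b · a^t ≤ (1/a) · (b / (-e · log a))^b. -/
theorem poly_times_exp_bound (a b t : ℝ) (ha0 : 0 < a) (ha1 : a < 1)
    (hb : 1 ≤ b) (ht : 0 ≤ t) :
    (1 + t) ^ b * a ^ t ≤ (1 / a) * (b / (-(Real.exp 1 * Real.log a))) ^ b := by
  have hlog : Real.log a < 0 := Real.log_neg ha0 ha1
  set c : ℝ := -Real.log a with hc_def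
  have hc : 0 < c := by simp [hc_def]; linarith
  have hb0 : 0 < b := lt_of_lt_of_le one_pos hb
  have hs : (0:ℝ) < 1 + t := by linarith
  have hec : -(Real.exp 1 * Real.log a) = Real.exp 1 * c := by
    rw [hc_def]; ring
  have key : Real.log ((1 + t) * c / b) ≤ (1 + t) * c / b - 1 :=
    Real.log_le_sub_one_of_pos (by positivity)
  have hlogprod : Real.log ((1 + t) * c / b)
      = Real.log (1 + t) + Real.log c - Real.log b := by
    rw [Real.log_div (by positivity) (ne_of_gt hb0), Real.log_mul (ne_of_gt hs) (ne_of_gt hc)]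
  have hL : (1 + t) ^ b * a ^ t
      = Real.exp (b * Real.log (1 + t) + t * Real.log a) := by
    rw [Real.rpow_def_of_pos hs, Real.rpow_def_of_pos ha0, ← Real.exp_add]
    ring_nf
  have hR : (1 / a) * (b / (-(Real.exp 1 * Real.log a))) ^ b
      = Real.exp (c + b * (Real.log b - (1 + Real.log c))) := by
    rw [hec]
    have h1 : (1 / a : ℝ) = Real.exp c := by
      rw [hc_def, Real.exp_neg, Real.exp_log ha0, one_div]
    have h2 : (b / (Real.exp 1 * c)) ^ b
        = Real.exp (b * (Real.log b - (1 + Real.log c))) := by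
      rw [Real.rpow_def_of_pos (by positivity)]
      congr 1
      rw [Real.log_div (ne_of_gt hb0) (by positivity),
        Real.log_mul (by positivity) (ne_of_gt hc), Real.log_exp]
      ring
    rw [h1, h2, ← Real.exp_add]
  rw [hL, hR, Real.exp_le_exp]
  have hmul : b * Real.log ((1 + t) * c / b) ≤ b * ((1 + t) * c / b - 1) :=
    mul_le_mul_of_nonneg_left key (le_of_lt hb0)
  rw [hlogprod] at hmul
  have hdiv : b * ((1 + t) * c / b - 1) = (1 + t) * c - b := by
    field_simp
  rw [hdiv] at hmul
  have hta : t * Real.log a = -(t * c) := by rw [hc_def]; ring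
  rw [hta]
  nlinarith [hmul]
end

section
/- Fix a finite set η and functions c₁, c₂ : ℝ^d → ℝ, and a point x. Then Σ_{ζ ⊆ η} (-1)^{|η\ζ|} (Σ_{y∈ζ} c₁(x-y)) · ∏_{u∈ζ} e^{c₂(x-u)} = Σ_{y∈η} c₁(x-y) e^{c₂(x-y)} ∏_{u ∈ η\y} (e^{c₂(x-u)} - 1). (Inverse K-transform of a product of a linear and an exponential rate.) -/
lemma aux_prod_sub_one {α : Type*} [DecidableEq α] (s : Finset α) (f : α → ℝ) :
    ∑ t ∈ s.powerset, (-1:ℝ)^((s \ t).card) * ∏ u ∈ t, f u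
      = ∏ u ∈ s, (f u - 1) := by
  have h : ∀ u ∈ s, f u - 1 = f u + (-1) := by intro u _; ring
  rw [Finset.prod_congr rfl h, Finset.prod_add]
  refine Finset.sum_congr rfl fun t ht => ?_
  rw [Finset.prod_const]
  ring

lemma aux_key {α : Type*} [DecidableEq α] (s : Finset α) (g f : α → ℝ) :
    ∑ t ∈ s.powerset, (-1:ℝ)^((s \ t).card) * (∑ y ∈ t, g y) * ∏ u ∈ t, f u
      = ∑ y ∈ s, g y * f y * ∏ u ∈ s.erase y, (f u - 1) := by
  induction s using Finset.induction_on with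
  | empty => simp
  | @insert a s ha ih =>
    rw [Finset.sum_powerset_insert ha, Finset.sum_insert ha]
    have h1 : ∑ t ∈ s.powerset, (-1:ℝ)^(((insert a s) \ t).card) * (∑ y ∈ t, g y) * ∏ u ∈ t, f u
        = -∑ t ∈ s.powerset, (-1:ℝ)^((s \ t).card) * (∑ y ∈ t, g y) * ∏ u ∈ t, f u := by
      rw [← Finset.sum_neg_distrib]
      refine Finset.sum_congr rfl fun t ht => ?_
      rw [Finset.mem_powerset] at ht
      have : (insert a s) \ t = insert a (s \ t) := by
        rw [Finset.insert_sdiff_of_notMem _ (fun h => ha (ht h))]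
      rw [this, Finset.card_insert_of_notMem (by simp [ha])]
      ring
    have h2 : ∑ t ∈ s.powerset, (-1:ℝ)^(((insert a s) \ (insert a t)).card) *
          (∑ y ∈ insert a t, g y) * ∏ u ∈ insert a t, f u
        = g a * f a * ∑ t ∈ s.powerset, (-1:ℝ)^((s \ t).card) * ∏ u ∈ t, f u
          + f a * ∑ t ∈ s.powerset, (-1:ℝ)^((s \ t).card) * (∑ y ∈ t, g y) * ∏ u ∈ t, f u := by
      rw [Finset.mul_sum, Finset.mul_sum, ← Finset.sum_add_distrib]
      refine Finset.sum_congr rfl fun t ht => ?_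
      rw [Finset.mem_powerset] at ht
      have hat : a ∉ t := fun h => ha (ht h)
      have : (insert a s) \ (insert a t) = s \ t := by
        rw [Finset.insert_sdiff_insert, Finset.sdiff_insert_of_notMem ha]
      rw [this, Finset.sum_insert hat, Finset.prod_insert hat]
      ring
    rw [h1, h2, aux_prod_sub_one, ih, Finset.erase_insert ha]
    have h3 : ∑ y ∈ s, g y * f y * ∏ u ∈ (insert a s).erase y, (f u - 1)
        = (f a - 1) * ∑ y ∈ s, g y * f y * ∏ u ∈ s.erase y, (f u - 1) := by
      rw [Finset.mul_sum]
      refine Finset.sum_congr rfl fun y hy => ?_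
      have hay : a ≠ y := fun h => ha (h ▸ hy)
      rw [Finset.erase_insert_of_ne hay,
        Finset.prod_insert (fun h => ha (Finset.mem_of_mem_erase h))]
      ring
    rw [h3]
    ring

theorem Kinv_linear_exp_rate (d : ℕ) [DecidableEq (Fin d → ℝ)]
    (η : Finset (Fin d → ℝ)) (c₁ c₂ : (Fin d → ℝ) → ℝ) (x : Fin d → ℝ) :
    ∑ ζ ∈ η.powerset, (-1 : ℝ) ^ ((η \ ζ).card) *
        (∑ y ∈ ζ, c₁ (x - y)) * ∏ u ∈ ζ, Real.exp (c₂ (x - u))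
      = ∑ y ∈ η, c₁ (x - y) * Real.exp (c₂ (x - y)) *
          ∏ u ∈ η.erase y, (Real.exp (c₂ (x - u)) - 1) := by
  exact aux_key η (fun y => c₁ (x - y)) (fun u => Real.exp (c₂ (x - u)))
end
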